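/- arXiv:2002.06968 — 2 statements merged into one kernel-verified Lean document; each statement's English description precedes it below -/
import Mathlib

section
/- Fix p ∈ (0, 1/2] and set c = 1 − p/2. For every natural number k with 1 ≤ k ≤ 1/p, the quantity −c·k + (1/p²)·(1 − (1 − p²)^k) is at most 1/2. -/
theorem nonadaptive_revenue_le_half (p c : ℝ) (hp0 : 0 < p) (hp : p ≤ 1 / 2)
    (hc : c = 1 - p / 2) (k : ℕ) (hk1 : 1 ≤ k) (hk2 : (k : ℝ) ≤ 1 / p) :
    -c * k + (1 / p ^ 2) * (1 - (1 - p ^ 2) ^ k) ≤ 1 / 2 := by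
  have hp2 : (0:ℝ) < p ^ 2 := by positivity
  have hb : 1 + (k : ℝ) * (-(p ^ 2)) ≤ (1 + (-(p ^ 2))) ^ k := by
    apply one_add_mul_le_pow
    nlinarith
  have hb' : 1 - (1 - p ^ 2) ^ k ≤ (k : ℝ) * p ^ 2 := by
    have : (1 : ℝ) - p ^ 2 = 1 + (-(p ^ 2)) := by ring
    rw [this]; nlinarith
  have h1 : (1 / p ^ 2) * (1 - (1 - p ^ 2) ^ k) ≤ (k : ℝ) := by
    rw [div_mul_eq_mul_div, one_mul, div_le_iff₀ hp2]
    linarith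
  have hkp : p * (k : ℝ) ≤ 1 := by
    have := (le_div_iff₀ hp0).mp hk2
    linarith
  have hk1r : (1:ℝ) ≤ (k:ℝ) := by exact_mod_cast hk1
  nlinarith
end

section
/- For a line of boxes, the generalized reservation value z_i of box b_i can only increase when additional boxes are appended to the end of the line: if L' extends L by appending boxes after b_n, then z_i(L') ≥ z_i(L) for every i ≤ n. -/
open MeasureTheory ProbabilityTheory Filter

/-- A stopping time for the line-constrained Pandora's box problem with boxes
`b_1, …, b_n`, starting in front of box `b_i`: it takes values in
`{i - 1, …, n}` and is non-anticipating (it depends only on the rewards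
revealed up to the stopping index). -/
def IsLineStoppingTime (n i : ℕ) (τ : (ℕ → ℝ) → ℕ) : Prop :=
  (∀ v : ℕ → ℝ, i - 1 ≤ τ v ∧ τ v ≤ n) ∧
    ∀ v v' : ℕ → ℝ, (∀ j ≤ τ v, v j = v' j) → τ v' = τ v

/-- Expected revenue `φ^τ(x, i)` of the stopping time `τ` on a line of boxes
with rewards `X` and costs `c`, starting with current maximum `x` in front of
box `b_i`: collect `max(x, max_{j = i}^{τ} X_j)` and pay `∑_{j = i}^{τ} c_j`. -/
noncomputable def lineRevenue {Ω : Type} [MeasureSpace Ω]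
    (X : ℕ → Ω → ℝ) (c : ℕ → ℝ) (τ : (ℕ → ℝ) → ℕ) (x : ℝ) (i : ℕ) : ℝ :=
  ∫ ω, (Finset.fold max x (fun j => X j ω) (Finset.Icc i (τ fun j => X j ω))
      - ∑ j ∈ Finset.Icc i (τ fun j => X j ω), c j)

/-- Optimal expected revenue `Φ(x, i)` from state `(x, i)` on a line of `n`
boxes: the supremum over stopping times of the expected revenue. -/
noncomputable def linePhi {Ω : Type} [MeasureSpace Ω]
    (n : ℕ) (X : ℕ → Ω → ℝ) (c : ℕ → ℝ) (x : ℝ) (i : ℕ) : ℝ :=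
  sSup { y | ∃ τ, IsLineStoppingTime n i τ ∧ y = lineRevenue X c τ x i }

/-- Appending boxes to the end of a line (extending the horizon from `n` to
`n'` boxes with the same rewards and costs) can only increase the generalized
reservation value `z_i`, defined as the smallest nonnegative fixed point of
`x ↦ Φ(x, i)`. -/
theorem reservation_value_mono_under_append
    {Ω : Type} [MeasureSpace Ω] [IsProbabilityMeasure (ℙ : Measure Ω)]
    (n n' : ℕ) (hnn' : n ≤ n') (X : ℕ → Ω → ℝ) (c : ℕ → ℝ)
    (hmeas : ∀ j, Measurable (X j)) (hint : ∀ j, Integrable (X j))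
    (hnn : ∀ j ω, 0 ≤ X j ω) (hc : ∀ j, 0 < c j)
    (i : ℕ) (hi1 : 1 ≤ i) (hin : i ≤ n)
    (z z' : ℝ)
    (hz : 0 ≤ z ∧ linePhi n X c z i = z ∧
      ∀ x : ℝ, 0 ≤ x → linePhi n X c x i = x → z ≤ x)
    (hz' : 0 ≤ z' ∧ linePhi n' X c z' i = z' ∧
      ∀ x : ℝ, 0 ≤ x → linePhi n' X c x i = x → z' ≤ x) :
    z ≤ z' := by
  obtain ⟨hz0, hzfix, hzmin⟩ := hz
  obtain ⟨hz'0, hz'fix, hz'min⟩ := hz'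
  -- the trivial stopping time: stop immediately
  set τ0 : (ℕ → ℝ) → ℕ := fun _ => i - 1 with hτ0
  have hicc : Finset.Icc i (i - 1) = ∅ := Finset.Icc_eq_empty (by omega)
  have hrev0 : lineRevenue X c τ0 z' i = z' := by
    simp [lineRevenue, τ0, hicc]
  have hst0 : IsLineStoppingTime n i τ0 := ⟨fun v => ⟨le_rfl, show i - 1 ≤ n by omega⟩, fun _ _ _ => rfl⟩
  -- uniform upper bound on revenues
  set g : Ω → ℝ := fun ω => z' + ∑ j ∈ Finset.Icc i n', X j ω with hg
  have hgint : Integrable g :=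
    (integrable_const z').add (integrable_finset_sum _ fun j _ => hint j)
  set M : ℝ := max 0 (∫ ω, g ω) with hM
  have hbdd : ∀ τ, IsLineStoppingTime n' i τ → lineRevenue X c τ z' i ≤ M := by
    intro τ hτ
    set f : Ω → ℝ := fun ω =>
      Finset.fold max z' (fun j => X j ω) (Finset.Icc i (τ fun j => X j ω))
        - ∑ j ∈ Finset.Icc i (τ fun j => X j ω), c j with hf
    have hfg : ∀ ω, f ω ≤ g ω := by
      intro ω
      have hsub : Finset.Icc i (τ fun j => X j ω) ⊆ Finset.Icc i n' :=
        Finset.Icc_subset_Icc_right (hτ.1 _).2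
      have hsum0 : 0 ≤ ∑ j ∈ Finset.Icc i n', X j ω :=
        Finset.sum_nonneg fun j _ => hnn j ω
      have h1 : Finset.fold max z' (fun j => X j ω)
          (Finset.Icc i (τ fun j => X j ω)) ≤ g ω := by
        rw [Finset.fold_max_le]
        constructor
        · simp only [g]; linarith
        · intro j hj
          have h2 := Finset.single_le_sum (f := fun k => X k ω)
            (fun k _ => hnn k ω) (hsub hj)
          simp only [g]; linarith
      have h2 : 0 ≤ ∑ j ∈ Finset.Icc i (τ fun j => X j ω), c j :=
        Finset.sum_nonneg fun j _ => (hc j).le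
      simp only [f]; linarith
    by_cases hfi : Integrable f
    · calc lineRevenue X c τ z' i = ∫ ω, f ω := rfl
        _ ≤ ∫ ω, g ω := integral_mono hfi hgint hfg
        _ ≤ M := le_max_right _ _
    · have h0 : lineRevenue X c τ z' i = 0 := integral_undef hfi
      rw [h0]; exact le_max_left _ _
  -- the set of revenues for n is contained in that for n'
  have hsub : {y | ∃ τ, IsLineStoppingTime n i τ ∧ y = lineRevenue X c τ z' i} ⊆
      {y | ∃ τ, IsLineStoppingTime n' i τ ∧ y = lineRevenue X c τ z' i} := by
    rintro y ⟨τ, ⟨hτ1, hτ2⟩, rfl⟩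
    exact ⟨τ, ⟨fun v => ⟨(hτ1 v).1, (hτ1 v).2.trans hnn'⟩, hτ2⟩, rfl⟩
  have hbdd' : BddAbove {y | ∃ τ, IsLineStoppingTime n' i τ ∧ y = lineRevenue X c τ z' i} :=
    ⟨M, by rintro y ⟨τ, hτ, rfl⟩; exact hbdd τ hτ⟩
  have hmem : z' ∈ {y | ∃ τ, IsLineStoppingTime n i τ ∧ y = lineRevenue X c τ z' i} :=
    ⟨τ0, hst0, hrev0.symm⟩
  have h1 : z' ≤ linePhi n X c z' i := le_csSup (BddAbove.mono hsub hbdd') hmem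
  have h2 : linePhi n X c z' i ≤ linePhi n' X c z' i :=
    csSup_le_csSup hbdd' ⟨z', hmem⟩ hsub
  have hfix : linePhi n X c z' i = z' := le_antisymm (h2.trans hz'fix.le) h1
  exact hzmin z' hz'0 hfix
end
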